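/- The vertices of the Voronoï region of D_n (the 2n vectors ±e_i and the 2ⁿ vectors (±1/2,…,±1/2)) span over ℤ the dual lattice D_n^#. -/

import Mathlib

/-! For `x ∈ Dₙ`, `⟨x, ±eᵢ⟩ = ±xᵢ` is an integer, and for `v` with entries `±1/2` the pairing
`⟨x, v⟩` differs from the integer `(∑ xᵢ)/2` by the integer `⟨x, v - (1/2, …, 1/2)⟩`; so the
vertices lie in `Dₙ^#`. Conversely, pairing `y ∈ Dₙ^#` with `eᵢ + eⱼ ∈ Dₙ` shows that every
`yᵢ + yⱼ` is an integer. With `a = 2 y_{i₀}` each `yᵢ - a/2 = (yᵢ + y_{i₀}) - a` is then an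
integer, so `y` is `a • (1/2, …, 1/2)` plus an integral vector. -/

open Set Filter MeasureTheory Pointwise

/-- The lattice `Dₙ = {x ∈ ℤⁿ : ∑ xᵢ even}`. -/
def Dlat (n : ℕ) : Set (Fin n → ℝ) :=
  {x | (∀ i, ∃ m : ℤ, x i = (m : ℝ)) ∧ ∃ k : ℤ, ∑ i, x i = 2 * (k : ℝ)}

/-- The Voronoï region of `Dₙ`. -/
def VorDn (n : ℕ) : Set (Fin n → ℝ) :=
  {z | ∀ x ∈ Dlat n, ∑ i, (z i) ^ 2 ≤ ∑ i, (z i - x i) ^ 2}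

/-- The norm `‖x‖ = max_{i ≠ j} (|xᵢ| + |xⱼ|)` (whose unit ball is the Voronoï
region of `Dₙ`). -/
noncomputable def DnNorm (n : ℕ) (x : Fin n → ℝ) : ℝ :=
  sSup {r : ℝ | ∃ i j, i ≠ j ∧ r = |x i| + |x j|}

/-- The vertex set of the Voronoï region of `Dₙ`: the `2n` vectors `±eᵢ` and the
`2ⁿ` vectors `(±1/2, …, ±1/2)`. -/
def VPDn (n : ℕ) : Set (Fin n → ℝ) :=
  {v | ∃ i, v = Pi.single i (1 : ℝ) ∨ v = -Pi.single i (1 : ℝ)} ∪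
    {v | ∀ i, v i = 1 / 2 ∨ v i = -(1 / 2)}

section IntDual

variable {ι : Type*} [Fintype ι]

def intDual (S : Set (ι → ℝ)) : Submodule ℤ (ι → ℝ) where
  carrier := {y | ∀ x ∈ S, ∃ m : ℤ, x ⬝ᵥ y = m}
  add_mem' {a b} ha hb x hx := by
    obtain ⟨m, hm⟩ := ha x hx
    obtain ⟨k, hk⟩ := hb x hx
    exact ⟨m + k, by rw [dotProduct_add, hm, hk, Int.cast_add]⟩
  zero_mem' x _ := ⟨0, by simp⟩
  smul_mem' c y hy x hx := by
    obtain ⟨m, hm⟩ := hy x hx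
    exact ⟨c * m, by rw [dotProduct_smul, hm, zsmul_eq_mul, Int.cast_mul]⟩

theorem exists_int_dotProduct_eq {x y : ι → ℝ} (hx : ∀ i, ∃ m : ℤ, x i = m)
    (hy : ∀ i, ∃ m : ℤ, y i = m) : ∃ m : ℤ, x ⬝ᵥ y = m := by
  choose a ha using hx
  choose b hb using hy
  exact ⟨∑ i, a i * b i, by simp [dotProduct, ha, hb]⟩

end IntDual

theorem single_add_single_mem_Dlat {n : ℕ} (i j : Fin n) :
    Pi.single i 1 + Pi.single j 1 ∈ Dlat n := by
  refine ⟨fun k => ⟨(Pi.single i 1 + Pi.single j 1 : Fin n → ℤ) k, ?_⟩, 1, ?_⟩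
  · simp only [Pi.add_apply, Pi.single_apply, Int.cast_add]
    split_ifs <;> simp
  · norm_num [Finset.sum_add_distrib, Finset.sum_pi_single']

theorem single_mem_intDual_Dlat {n : ℕ} (i : Fin n) : Pi.single i 1 ∈ intDual (Dlat n) :=
  fun x hx => by simpa [dotProduct_single] using hx.1 i

theorem half_mem_intDual_Dlat {n : ℕ} {v : Fin n → ℝ} (hv : ∀ i, v i = 1 / 2 ∨ v i = -(1 / 2)) :
    v ∈ intDual (Dlat n) := by
  rintro x ⟨hx, k, hk⟩
  have hw : ∀ i, ∃ m : ℤ, (v - 1 / 2) i = m := fun i => by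
    rcases hv i with h | h
    · exact ⟨0, by simp [h]⟩
    · exact ⟨-1, by norm_num [h]⟩
  obtain ⟨m, hm⟩ := exists_int_dotProduct_eq hx hw
  have hsplit : x ⬝ᵥ v = x ⬝ᵥ (v - 1 / 2) + (∑ i, x i) / 2 := by
    simp [dotProduct, mul_sub, Finset.sum_sub_distrib, Finset.sum_mul, div_eq_mul_inv]
  exact ⟨m + k, by rw [hsplit, hm, hk]; push_cast; ring⟩

theorem VPDn_subset_intDual_Dlat (n : ℕ) : VPDn n ⊆ intDual (Dlat n) := by
  rintro v (⟨i, rfl | rfl⟩ | hv)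
  · exact single_mem_intDual_Dlat i
  · exact neg_mem (single_mem_intDual_Dlat i)
  · exact half_mem_intDual_Dlat hv

theorem mem_span_VPDn_of_int {n : ℕ} {z : Fin n → ℝ} (hz : ∀ i, ∃ m : ℤ, z i = m) :
    z ∈ Submodule.span ℤ (VPDn n) := by
  choose c hc using hz
  rw [← Finset.univ_sum_single z]
  refine Submodule.sum_mem _ fun i _ => ?_
  have hsingle : Pi.single i (z i) = c i • (Pi.single i (1 : ℝ) : Fin n → ℝ) := by
    rw [← Pi.single_smul', hc i, zsmul_eq_mul, mul_one]
  rw [hsingle]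
  exact Submodule.smul_mem _ _ (Submodule.subset_span (Or.inl ⟨i, Or.inl rfl⟩))

theorem mem_span_VPDn_of_add_int {n : ℕ} {y : Fin n → ℝ}
    (hy : ∀ i j, ∃ m : ℤ, y i + y j = m) : y ∈ Submodule.span ℤ (VPDn n) := by
  rcases isEmpty_or_nonempty (Fin n) with _ | ⟨⟨i₀⟩⟩
  · rw [Subsingleton.elim y 0]
    exact zero_mem _
  obtain ⟨a, ha⟩ := hy i₀ i₀
  have hint : ∀ i, ∃ m : ℤ, (y - a • (1 / 2)) i = m := fun i => by
    obtain ⟨b, hb⟩ := hy i i₀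
    exact ⟨b - a, by simp; linarith⟩
  have hhalf : (1 / 2 : Fin n → ℝ) ∈ VPDn n := Or.inr fun _ => Or.inl (by simp)
  simpa only [sub_add_cancel] using Submodule.add_mem _ (mem_span_VPDn_of_int hint)
    (Submodule.smul_mem _ a (Submodule.subset_span hhalf))

theorem add_int_of_mem_intDual_Dlat {n : ℕ} {y : Fin n → ℝ} (hy : y ∈ intDual (Dlat n))
    (i j : Fin n) : ∃ m : ℤ, y i + y j = m := by
  simpa [add_dotProduct, dotProduct_comm _ y, dotProduct_single] using
    hy _ (single_add_single_mem_Dlat i j)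

theorem vertices_span_dual_Dn_general (n : ℕ) :
    (Submodule.span ℤ (VPDn n) : Set (Fin n → ℝ))
      = {y | ∀ x ∈ Dlat n, ∃ m : ℤ, ∑ i, x i * y i = (m : ℝ)} := by
  change _ = (intDual (Dlat n) : Set (Fin n → ℝ))
  refine le_antisymm (Submodule.span_le.2 (VPDn_subset_intDual_Dlat n)) fun y hy => ?_
  exact mem_span_VPDn_of_add_int (add_int_of_mem_intDual_Dlat hy)

theorem vertices_span_dual_Dn (n : ℕ) (hn : 4 ≤ n) :
    (Submodule.span ℤ (VPDn n) : Set (Fin n → ℝ))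
      = {y | ∀ x ∈ Dlat n, ∃ m : ℤ, ∑ i, x i * y i = (m : ℝ)} :=
  vertices_span_dual_Dn_general n
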